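/- Let d ≥ 2 and q = 2d−1. Let n₁, …, n_{d−1} be pairwise relatively prime positive integers with n₁ even, and let c be an odd positive integer. Define vectors in ℤ^d (with standard basis e₁,…,e_d): u₁ = q·e₁; uᵢ = eᵢ − i·e₁ for odd i with 2 ≤ i ≤ d−1; uᵢ = eᵢ + (q−i)·e₁ for even i with 2 ≤ i ≤ d−1; u_d = e_d. Let Λ ⊂ ℤ^d be the subgroup generated by n₁u₁, …, n_{d−1}u_{d−1}, and c·e_d − Σ_{i=1}^{d−1} uᵢ. Let L̃_{d−1} = {a ∈ ℤ^{d−1} : Σ_{i=1}^{d−1} i·aᵢ ≡ 0 (mod 2d−1)} and K_d = {x ∈ ℤ^d : Σᵢ xᵢ is even} ∪ {x ∈ ℤ^d : (x₁,…,x_{d−1}) ∈ L̃_{d−1}}. Then: (i) K_d + v = K_d for every v ∈ Λ; and (ii) the image of K_d in ℤ^d/Λ is connected under the rook adjacency induced on ℤ^d/Λ. -/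

import Mathlib

/-- The lifted perfect Lee code in `ℤ^(d-1)` with modulus `q = 2d-1`. -/
def memLtil (d : ℕ) (a : Fin (d - 1) → ℤ) : Prop :=
  (2 * (d : ℤ) - 1) ∣ ∑ i : Fin (d - 1), ((i.val : ℤ) + 1) * a i

/-- The pattern `K_d ⊆ ℤ^d`: all cells with even coordinate sum, together with all
cells whose first `d-1` coordinates lie in the lifted code `L̃_{d-1}`. -/
def Kd (d : ℕ) : Set (Fin d → ℤ) :=
  {x | Even (∑ i, x i) ∨ memLtil d fun i => x (Fin.castLE (Nat.sub_le d 1) i)}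

/-- A set `S` is connected under an adjacency relation: it is nonempty and any two
of its elements are joined by a path staying inside `S`. -/
def ConnectedIn {α : Type*} (adj : α → α → Prop) (S : Set α) : Prop :=
  S.Nonempty ∧ ∀ x ∈ S, ∀ y ∈ S,
    Relation.ReflTransGen (fun a b => adj a b ∧ a ∈ S ∧ b ∈ S) x y

/-- Rook adjacency induced on the discrete torus `ℤ^d/Λ`: two classes are adjacent
iff they admit representatives at `ℓ¹`-distance 1. -/
def torusAdj (d : ℕ) (Λ : AddSubgroup (Fin d → ℤ)) (a b : (Fin d → ℤ) ⧸ Λ) : Prop :=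
  ∃ x y : Fin d → ℤ, (QuotientAddGroup.mk x : (Fin d → ℤ) ⧸ Λ) = a ∧
    (QuotientAddGroup.mk y : (Fin d → ℤ) ⧸ Λ) = b ∧ (∑ i, |x i - y i|) = 1

/-- The vectors `u₁, …, u_{d−1}` of the paper, viewed in `ℤ^d` (supported on the first
`d−1` coordinates; 0-indexed: index `j` carries `u_{j+1}`): `u₁ = q·e₁`; for
`2 ≤ i ≤ d−1`, `uᵢ = eᵢ − i·e₁` if `i` is odd and `uᵢ = eᵢ + (q−i)·e₁` if `i` is even,
where `q = 2d−1`. -/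
def uvecZ (d : ℕ) (j : Fin (d - 1)) : Fin d → ℤ :=
  if j.val = 0 then (2 * (d : ℤ) - 1) • Pi.single (Fin.castLE (Nat.sub_le d 1) j) 1
  else if Odd (j.val + 1) then
    Pi.single (Fin.castLE (Nat.sub_le d 1) j) 1 -
      ((j.val : ℤ) + 1) •
        Pi.single (Fin.castLE (Nat.sub_le d 1) (⟨0, j.pos⟩ : Fin (d - 1))) 1
  else
    Pi.single (Fin.castLE (Nat.sub_le d 1) j) 1 +
      (2 * (d : ℤ) - 1 - ((j.val : ℤ) + 1)) •
        Pi.single (Fin.castLE (Nat.sub_le d 1) (⟨0, j.pos⟩ : Fin (d - 1))) 1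

/-- The lattice `Λ ⊆ ℤ^d` generated by `n₁u₁, …, n_{d−1}u_{d−1}` and
`c·e_d − Σ_{i=1}^{d−1} uᵢ` (recall `u_d = e_d`). -/
def latticeLambda (d : ℕ) (hd : 2 ≤ d) (n : Fin (d - 1) → ℕ) (c : ℕ) :
    AddSubgroup (Fin d → ℤ) :=
  AddSubgroup.closure
    ((Set.range fun j : Fin (d - 1) => (n j : ℤ) • uvecZ d j) ∪
      {(c : ℤ) • (Pi.single (⟨d - 1, by omega⟩ : Fin d) 1 : Fin d → ℤ) -
        ∑ j : Fin (d - 1), uvecZ d j})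

/-!
`Kd d` is the preimage of `{(a, b) | a = 0 ∨ b = 0}` under
`x ↦ (Σ xᵢ mod 2, w x mod q)`, where `w x = Σ_{i < d} i·xᵢ` is the weight defining the Lee
code, and every generator of `Λ` lies in the kernel of this map; this gives (i).

For (ii): the residues mod `q = 2d - 1` are `0, ±1, …, ±(d - 1)`, so every cell is at rook
distance at most one from a cell with `q ∣ w`, and the `e_d`-line through such a cell stays in
`Kd d`. It remains to see that two cells with `q ∣ w` differ by an element of `Λ + ℤ e_d`.
These cells form the lattice spanned by `u₁, …, u_{d-1}, e_d`, while `Λ + ℤ e_d` contains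
`Σ uᵢ` and every `nᵢ uᵢ`; for pairwise coprime `nᵢ`, the Chinese remainder theorem shows that
these generate every `uᵢ`.
-/

theorem Int.exists_abs_le_dvd_sub (w : ℤ) (k : ℕ) :
    ∃ t : ℤ, |t| ≤ k ∧ 2 * (k : ℤ) + 1 ∣ w - t := by
  have hm : 0 < 2 * k + 1 := by omega
  refine ⟨w.bmod (2 * k + 1), abs_le.2 ⟨?_, ?_⟩, ?_⟩
  · have := Int.le_bmod (x := w) hm
    omega
  · have := Int.bmod_lt (x := w) hm
    omega
  · exact_mod_cast Int.ModEq.dvd (Int.bmod_emod (x := w) (m := 2 * k + 1))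

theorem single_eq_zsmul_single_one {ι : Type*} [DecidableEq ι] (k : ι) (s : ℤ) :
    (Pi.single k s : ι → ℤ) = s • Pi.single k 1 := by
  rw [← Pi.single_smul', smul_eq_mul, mul_one]

theorem sum_abs_sub_add_single {ι : Type*} [Fintype ι] [DecidableEq ι] (x : ι → ℤ) (k : ι)
    (s : ℤ) : ∑ i, |x i - (x + Pi.single k s : ι → ℤ) i| = |s| := by
  simp [Pi.single_apply, apply_ite]

theorem mem_closure_insert_sum_of_pairwise_coprime {ι G : Type*} [Fintype ι] [AddCommGroup G]
    {n : ι → ℕ} (hn : Pairwise fun i j => Nat.Coprime (n i) (n j)) (u : ι → G) (i : ι) :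
    u i ∈ AddSubgroup.closure (insert (∑ j, u j) (Set.range fun j => (n j : ℤ) • u j)) := by
  classical
  have hI : Pairwise (Function.onFun IsCoprime fun j => Ideal.span {(n j : ℤ)}) := fun a b hab =>
    (Ideal.isCoprime_span_singleton_iff _ _).2 (Nat.isCoprime_iff_coprime.2 (hn hab))
  obtain ⟨r, hr⟩ := Ideal.exists_forall_sub_mem_ideal hI (Pi.single i 1)
  choose k hk using fun j => Ideal.mem_span_singleton'.1 (hr j)
  have hu : u i = r • ∑ j, u j - ∑ j, k j • (n j : ℤ) • u j := by
    simp only [smul_smul, hk, sub_smul, Finset.sum_sub_distrib, Finset.smul_sum]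
    simp [Pi.single_apply]
  rw [hu]
  exact sub_mem (zsmul_mem (AddSubgroup.subset_closure (Set.mem_insert _ _)) r)
    (sum_mem fun j _ => zsmul_mem
      (AddSubgroup.subset_closure (Set.mem_insert_of_mem _ (Set.mem_range_self j))) _)

section Cells

variable {d : ℕ}

def coordSum (d : ℕ) : (Fin d → ℤ) →+ ℤ where
  toFun x := ∑ i, x i
  map_zero' := by simp
  map_add' x y := by simp [Finset.sum_add_distrib]

def leeWeight (d : ℕ) : (Fin d → ℤ) →+ ℤ where
  toFun x := ∑ i : Fin (d - 1), ((i : ℤ) + 1) * x (Fin.castLE (Nat.sub_le d 1) i)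
  map_zero' := by simp
  map_add' x y := by simp [mul_add, Finset.sum_add_distrib]

theorem leeWeight_apply (x : Fin d → ℤ) :
    leeWeight d x = ∑ i : Fin (d - 1), ((i : ℤ) + 1) * x (Fin.castLE (Nat.sub_le d 1) i) :=
  rfl

theorem mem_Kd_iff {x : Fin d → ℤ} :
    x ∈ Kd d ↔ 2 ∣ coordSum d x ∨ 2 * (d : ℤ) - 1 ∣ leeWeight d x :=
  or_congr_left even_iff_two_dvd

@[simp]
theorem coordSum_single (k : Fin d) (s : ℤ) : coordSum d (Pi.single k s) = s := by
  simp [coordSum]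

@[simp]
theorem leeWeight_single_castLE (j : Fin (d - 1)) (s : ℤ) :
    leeWeight d (Pi.single (Fin.castLE (Nat.sub_le d 1) j) s) = ((j : ℤ) + 1) * s := by
  simp [leeWeight, Pi.single_apply, Fin.castLE_inj]

@[simp]
theorem leeWeight_single_last (h : d - 1 < d) (s : ℤ) :
    leeWeight d (Pi.single ⟨d - 1, h⟩ s) = 0 := by
  refine (leeWeight_apply _).trans (Finset.sum_eq_zero fun i _ => ?_)
  have : Fin.castLE (Nat.sub_le d 1) i ≠ ⟨d - 1, h⟩ := by simp [Fin.ext_iff]; omega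
  rw [Pi.single_eq_of_ne this, mul_zero]

end Cells

section Generators

variable {d : ℕ}

theorem uvecZ_zero (h : 0 < d - 1) :
    uvecZ d ⟨0, h⟩ = (2 * (d : ℤ) - 1) • Pi.single (Fin.castLE (Nat.sub_le d 1) ⟨0, h⟩) 1 :=
  if_pos rfl

theorem dvd_leeWeight_uvecZ (j : Fin (d - 1)) : 2 * (d : ℤ) - 1 ∣ leeWeight d (uvecZ d j) := by
  unfold uvecZ
  split_ifs with h0 <;>
    simp only [map_zsmul, map_sub, map_add, leeWeight_single_castLE, smul_eq_mul] <;> simp [h0]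

theorem coordSum_uvecZ_zero (h : 0 < d - 1) :
    coordSum d (uvecZ d ⟨0, h⟩) = 2 * (d : ℤ) - 1 := by
  simp only [uvecZ_zero, map_zsmul, coordSum_single, smul_eq_mul, mul_one]

theorem two_dvd_coordSum_uvecZ {j : Fin (d - 1)} (hj : j.val ≠ 0) :
    2 ∣ coordSum d (uvecZ d j) := by
  unfold uvecZ
  split_ifs with h0 hodd
  · exact absurd h0 hj
  · simp only [map_zsmul, map_sub, coordSum_single, smul_eq_mul]
    have := Nat.odd_iff.1 hodd
    omega
  · simp only [map_zsmul, map_add, coordSum_single, smul_eq_mul]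
    have := Nat.odd_iff.not.1 hodd
    omega

theorem single_sub_smul_mem_closure_uvecZ (h : 0 < d - 1) (j : Fin (d - 1)) :
    Pi.single (Fin.castLE (Nat.sub_le d 1) j) 1 -
        ((j : ℤ) + 1) • Pi.single (Fin.castLE (Nat.sub_le d 1) ⟨0, h⟩) 1 ∈
      AddSubgroup.closure (Set.range (uvecZ d)) := by
  have hu (i : Fin (d - 1)) : uvecZ d i ∈ AddSubgroup.closure (Set.range (uvecZ d)) :=
    AddSubgroup.subset_closure ⟨i, rfl⟩
  by_cases h0 : j.val = 0
  · obtain rfl : j = ⟨0, h⟩ := Fin.ext h0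
    simp
  by_cases hodd : Odd (j.val + 1)
  · convert hu j using 1
    simp only [uvecZ, h0, hodd, if_false, if_true]
  · convert sub_mem (hu j) (hu ⟨0, h⟩) using 1
    simp only [uvecZ, h0, hodd, if_false, if_true]
    module

end Generators

section Periods

variable {d : ℕ}

def KdPeriods (d : ℕ) : AddSubgroup (Fin d → ℤ) :=
  (AddSubgroup.zmultiples 2).comap (coordSum d) ⊓
    (AddSubgroup.zmultiples (2 * (d : ℤ) - 1)).comap (leeWeight d)

theorem mem_KdPeriods_iff {v : Fin d → ℤ} :
    v ∈ KdPeriods d ↔ 2 ∣ coordSum d v ∧ 2 * (d : ℤ) - 1 ∣ leeWeight d v := by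
  simp only [KdPeriods, AddSubgroup.mem_inf, AddSubgroup.mem_comap, Int.mem_zmultiples_iff]

theorem add_mem_Kd_iff {v : Fin d → ℤ} (hv : v ∈ KdPeriods d) {x : Fin d → ℤ} :
    x + v ∈ Kd d ↔ x ∈ Kd d := by
  obtain ⟨h2, hq⟩ := mem_KdPeriods_iff.1 hv
  simp only [mem_Kd_iff, map_add, dvd_add_left h2, dvd_add_left hq]

theorem image_add_right_Kd {v : Fin d → ℤ} (hv : v ∈ KdPeriods d) :
    (fun x => x + v) '' Kd d = Kd d := by
  rw [Set.image_add_right]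
  ext x
  exact add_mem_Kd_iff (neg_mem hv)

theorem latticeLambda_le_KdPeriods (hd : 2 ≤ d) {n : Fin (d - 1) → ℕ} {c : ℕ}
    (hn : Even (n ⟨0, Nat.sub_pos_of_lt hd⟩)) (hc : Odd c) :
    latticeLambda d hd n c ≤ KdPeriods d := by
  have h0 : 0 < d - 1 := Nat.sub_pos_of_lt hd
  refine (AddSubgroup.closure_le _).2 ?_
  rintro _ (⟨j, rfl⟩ | rfl)
  · rw [SetLike.mem_coe, mem_KdPeriods_iff, map_zsmul, map_zsmul, smul_eq_mul, smul_eq_mul]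
    refine ⟨?_, (dvd_leeWeight_uvecZ j).mul_left _⟩
    by_cases hj : j.val = 0
    · rw [show j = ⟨0, h0⟩ from Fin.ext hj]
      exact (Int.natCast_dvd_natCast.2 (even_iff_two_dvd.1 hn)).mul_right _
    · exact (two_dvd_coordSum_uvecZ hj).mul_left _
  · simp only [SetLike.mem_coe, mem_KdPeriods_iff, map_sub, map_zsmul, map_sum, coordSum_single,
      leeWeight_single_last, smul_eq_mul, mul_one, mul_zero, zero_sub, dvd_neg]
    refine ⟨?_, Finset.dvd_sum fun j _ => dvd_leeWeight_uvecZ j⟩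
    rw [← Finset.add_sum_erase _ _ (Finset.mem_univ ⟨0, h0⟩), coordSum_uvecZ_zero]
    have : 2 ∣ ∑ j ∈ Finset.univ.erase ⟨0, h0⟩, coordSum d (uvecZ d j) :=
      Finset.dvd_sum fun j hj =>
        two_dvd_coordSum_uvecZ (Fin.val_ne_iff.2 (Finset.ne_of_mem_erase hj))
    obtain ⟨a, rfl⟩ := hc
    omega

end Periods

section Lattice

variable {d : ℕ}

theorem sub_leeWeight_smul_mem_closure (h : 0 < d - 1) (v : Fin d → ℤ) :
    v - leeWeight d v • Pi.single (Fin.castLE (Nat.sub_le d 1) ⟨0, h⟩) 1 ∈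
      AddSubgroup.closure (insert (Pi.single ⟨d - 1, by omega⟩ 1) (Set.range (uvecZ d))) := by
  have hlast : d - 1 < d := by omega
  set e₁ : Fin d → ℤ := Pi.single (Fin.castLE (Nat.sub_le d 1) ⟨0, h⟩) 1
  have hN := AddSubgroup.closure_mono
    (Set.subset_insert (Pi.single (⟨d - 1, hlast⟩ : Fin d) (1 : ℤ)) (Set.range (uvecZ d)))
  have hv : v - leeWeight d v • e₁ =
      ∑ i, (Pi.single i (v i) - leeWeight d (Pi.single i (v i)) • e₁) := by
    simp only [Finset.sum_sub_distrib, ← Finset.sum_smul, ← map_sum, Finset.univ_sum_single]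
  rw [hv]
  refine sum_mem fun k _ => ?_
  rcases lt_or_eq_of_le (Nat.le_sub_one_of_lt k.isLt) with hk | hk
  · obtain ⟨j, rfl⟩ : ∃ j, Fin.castLE (Nat.sub_le d 1) j = k := ⟨⟨k, hk⟩, rfl⟩
    convert zsmul_mem (hN (single_sub_smul_mem_closure_uvecZ h j)) (v _) using 1
    rw [leeWeight_single_castLE, single_eq_zsmul_single_one _ (v _), smul_sub, smul_smul,
      mul_comm]
  · obtain rfl : k = ⟨d - 1, hlast⟩ := Fin.ext hk
    rw [leeWeight_single_last, zero_smul, sub_zero, single_eq_zsmul_single_one _ (v _)]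
    exact zsmul_mem (AddSubgroup.subset_closure (Set.mem_insert _ (Set.range (uvecZ d)))) _

theorem mem_closure_uvecZ_of_dvd (h : 0 < d - 1) {v : Fin d → ℤ}
    (hv : 2 * (d : ℤ) - 1 ∣ leeWeight d v) :
    v ∈ AddSubgroup.closure (insert (Pi.single ⟨d - 1, by omega⟩ 1) (Set.range (uvecZ d))) := by
  obtain ⟨k, hk⟩ := hv
  have hsplit : v = (v - leeWeight d v • Pi.single (Fin.castLE (Nat.sub_le d 1) ⟨0, h⟩) 1) +
      k • uvecZ d ⟨0, h⟩ := by
    rw [uvecZ_zero, smul_smul, mul_comm, ← hk, sub_add_cancel]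
  rw [hsplit]
  exact add_mem (sub_leeWeight_smul_mem_closure h v)
    (zsmul_mem (AddSubgroup.subset_closure (Set.mem_insert_of_mem _ (Set.mem_range_self _))) k)

theorem mem_latticeLambda_sup_of_dvd (hd : 2 ≤ d) {n : Fin (d - 1) → ℕ}
    (hn : Pairwise fun i j => Nat.Coprime (n i) (n j)) (c : ℕ) {v : Fin d → ℤ}
    (hv : 2 * (d : ℤ) - 1 ∣ leeWeight d v) :
    v ∈ latticeLambda d hd n c ⊔ AddSubgroup.zmultiples (Pi.single ⟨d - 1, by omega⟩ 1) := by
  set Λ := latticeLambda d hd n c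
  set e : Fin d → ℤ := Pi.single ⟨d - 1, by omega⟩ 1
  have hgen : insert (∑ j, uvecZ d j) (Set.range fun j => (n j : ℤ) • uvecZ d j) ⊆
      ↑(Λ ⊔ AddSubgroup.zmultiples e) := by
    rintro _ (rfl | ⟨j, rfl⟩)
    · have hg : (c : ℤ) • e - ∑ j, uvecZ d j ∈ Λ :=
        AddSubgroup.subset_closure (Set.mem_union_right _ rfl)
      have := sub_mem (AddSubgroup.mem_sup_right (zsmul_mem (AddSubgroup.mem_zmultiples e) c))
        (AddSubgroup.mem_sup_left hg)
      rwa [sub_sub_cancel] at this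
    · exact AddSubgroup.mem_sup_left
        (AddSubgroup.subset_closure (Set.mem_union_left _ (Set.mem_range_self j)))
  refine (AddSubgroup.closure_le _).2 ?_ (mem_closure_uvecZ_of_dvd (Nat.sub_pos_of_lt hd) hv)
  rintro _ (rfl | ⟨j, rfl⟩)
  · exact AddSubgroup.mem_sup_right (AddSubgroup.mem_zmultiples e)
  · exact (AddSubgroup.closure_le _).2 hgen (mem_closure_insert_sum_of_pairwise_coprime hn _ j)

end Lattice

section Connectivity

variable {d : ℕ} (Λ : AddSubgroup (Fin d → ℤ))

def torusStep (S : Set (Fin d → ℤ)) (a b : (Fin d → ℤ) ⧸ Λ) : Prop :=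
  torusAdj d Λ a b ∧ a ∈ QuotientAddGroup.mk '' S ∧ b ∈ QuotientAddGroup.mk '' S

theorem torusStep_mk_add_single {S : Set (Fin d → ℤ)} {x : Fin d → ℤ} {k : Fin d} {s : ℤ}
    (hs : |s| = 1) (hx : x ∈ S) (hy : x + Pi.single k s ∈ S) :
    torusStep Λ S (QuotientAddGroup.mk x) (QuotientAddGroup.mk (x + Pi.single k s)) :=
  ⟨⟨x, _, rfl, rfl, by rw [sum_abs_sub_add_single, hs]⟩, ⟨x, hx, rfl⟩, ⟨_, hy, rfl⟩⟩

theorem torusStep.symm {S : Set (Fin d → ℤ)} {a b : (Fin d → ℤ) ⧸ Λ} (h : torusStep Λ S a b) :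
    torusStep Λ S b a := by
  obtain ⟨⟨x, y, hx, hy, hxy⟩, ha, hb⟩ := h
  refine ⟨⟨y, x, hy, hx, ?_⟩, hb, ha⟩
  simpa only [abs_sub_comm] using hxy

theorem reflTransGen_torusStep_symm {S : Set (Fin d → ℤ)} {a b : (Fin d → ℤ) ⧸ Λ}
    (h : Relation.ReflTransGen (torusStep Λ S) a b) :
    Relation.ReflTransGen (torusStep Λ S) b a :=
  Relation.ReflTransGen.mono (fun _ _ => torusStep.symm Λ) _ _
    (Relation.ReflTransGen.swap _ _ h)

theorem exists_reflTransGen_dvd_leeWeight (hd : 0 < d) {x : Fin d → ℤ} (hx : x ∈ Kd d) :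
    ∃ z, 2 * (d : ℤ) - 1 ∣ leeWeight d z ∧
      Relation.ReflTransGen (torusStep Λ (Kd d)) (QuotientAddGroup.mk x)
        (QuotientAddGroup.mk z) := by
  obtain ⟨t, ht, hdvd⟩ := Int.exists_abs_le_dvd_sub (leeWeight d x) (d - 1)
  rw [show 2 * ((d - 1 : ℕ) : ℤ) + 1 = 2 * d - 1 by omega] at hdvd
  rw [Int.abs_eq_natAbs] at ht
  rcases eq_or_ne t 0 with rfl | ht0
  · exact ⟨x, by simpa using hdvd, .refl⟩
  have hj : t.natAbs - 1 < d - 1 := by omega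
  have hw : leeWeight d (x + Pi.single (Fin.castLE (Nat.sub_le d 1) ⟨_, hj⟩) (-t.sign)) =
      leeWeight d x - t := by
    have : ((t.natAbs - 1 : ℕ) : ℤ) + 1 = t.natAbs := by omega
    rw [map_add, leeWeight_single_castLE, Fin.val_mk, this]
    linear_combination -Int.sign_mul_natAbs t
  have hz := mem_Kd_iff.2 (Or.inr (hw ▸ hdvd))
  refine ⟨_, hw ▸ hdvd, .single (torusStep_mk_add_single Λ ?_ hx hz)⟩
  rw [abs_neg, Int.abs_sign_of_ne_zero ht0]

theorem reflTransGen_add_zsmul_single_last (h : d - 1 < d) {z : Fin d → ℤ}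
    (hz : 2 * (d : ℤ) - 1 ∣ leeWeight d z) (m : ℤ) :
    Relation.ReflTransGen (torusStep Λ (Kd d)) (QuotientAddGroup.mk z)
      (QuotientAddGroup.mk (z + m • Pi.single ⟨d - 1, h⟩ 1)) := by
  set e : Fin d → ℤ := Pi.single ⟨d - 1, h⟩ 1
  have hK (m : ℤ) : z + m • e ∈ Kd d :=
    mem_Kd_iff.2 <| Or.inr <| by
      rwa [map_add, map_zsmul, leeWeight_single_last, smul_zero, add_zero]
  have hstep (m s : ℤ) (hs : |s| = 1) :
      torusStep Λ (Kd d) (QuotientAddGroup.mk (z + m • e))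
        (QuotientAddGroup.mk (z + (m + s) • e)) := by
    have hms : z + (m + s) • e = z + m • e + Pi.single ⟨d - 1, h⟩ s := by
      rw [add_smul, single_eq_zsmul_single_one _ s, add_assoc]
    rw [hms]
    exact torusStep_mk_add_single Λ hs (hK m) (hms ▸ hK (m + s))
  induction m using Int.induction_on with
  | zero => rw [zero_smul, add_zero]
  | succ k ih => exact ih.tail (hstep k 1 abs_one)
  | pred k ih =>
    rw [sub_eq_add_neg]
    exact ih.tail (hstep (-k) (-1) (by simp))

end Connectivity

/-- For pairwise coprime positive integers `n₁,…,n_{d−1}` with `n₁` even and an odd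
positive integer `c`: (i) `K_d` is invariant under translation by the lattice `Λ`
generated by `n₁u₁,…,n_{d−1}u_{d−1}` and `c·e_d − Σᵢuᵢ`; and (ii) the image of `K_d`
in `ℤ^d/Λ` is rook-connected. -/
theorem Kd_quotient_connected (d : ℕ) (hd : 2 ≤ d) (n : Fin (d - 1) → ℕ)
    (hcop : Pairwise fun i j => Nat.Coprime (n i) (n j))
    (hn1 : Even (n ⟨0, by omega⟩)) (c : ℕ) (hcodd : Odd c) :
    (∀ v ∈ latticeLambda d hd n c, (fun x => x + v) '' Kd d = Kd d) ∧
    ConnectedIn (torusAdj d (latticeLambda d hd n c))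
      ((QuotientAddGroup.mk : (Fin d → ℤ) → (Fin d → ℤ) ⧸ latticeLambda d hd n c) ''
        Kd d) := by
  set Λ := latticeLambda d hd n c
  refine ⟨fun v hv => image_add_right_Kd (latticeLambda_le_KdPeriods hd hn1 hcodd hv),
    ⟨QuotientAddGroup.mk 0, 0, mem_Kd_iff.2 (Or.inl (by simp)), rfl⟩, ?_⟩
  rintro _ ⟨x, hx, rfl⟩ _ ⟨y, hy, rfl⟩
  obtain ⟨x', hx', hxx'⟩ := exists_reflTransGen_dvd_leeWeight Λ (by omega) hx
  obtain ⟨y', hy', hyy'⟩ := exists_reflTransGen_dvd_leeWeight Λ (by omega) hy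
  have hdiff : 2 * (d : ℤ) - 1 ∣ leeWeight d (y' - x') := by
    rw [map_sub]
    exact dvd_sub hy' hx'
  obtain ⟨w, hw, _, ⟨m, rfl⟩, hwm⟩ :=
    AddSubgroup.mem_sup.1 (mem_latticeLambda_sup_of_dvd hd hcop c hdiff)
  have hmk : (QuotientAddGroup.mk (x' + m • Pi.single ⟨d - 1, by omega⟩ 1) : _ ⧸ Λ) =
      QuotientAddGroup.mk y' :=
    QuotientAddGroup.eq.2 (by rwa [neg_add_eq_sub, ← sub_sub, ← hwm, add_sub_cancel_right])
  exact hxx'.trans ((hmk ▸ reflTransGen_add_zsmul_single_last Λ _ hx' m).trans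
    (reflTransGen_torusStep_symm Λ hyy'))
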